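/- Let Φ(ρ) = Σ_k A_k ρ A_k† be a quantum channel on 2^m × 2^m complex matrices (Σ_k A_k† A_k = 𝟙, Kraus index set identified with Fin m → Fin 2), with complementary channel Φ^C. Assume: (i) for every diagonal Pauli string Λ ∈ {𝟙,Z}^{⊗m} and every ρ, Φ(ΛρΛ) = ΛΦ(ρ)Λ and Φ^C(ΛρΛ) = ΛΦ^C(ρ)Λ; (ii) the coherent information is concave on density matrices, i.e., for all density matrices ρ, σ and t ∈ [0,1], I_coh(Φ, tρ + (1−t)σ) ≥ t·I_coh(Φ, ρ) + (1−t)·I_coh(Φ, σ). Then the supremum of I_coh(Φ, ρ) over all density matrices ρ equals the supremum of I_coh(Φ, ρ) over all diagonal density matrices ρ. -/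

import Mathlib

open Matrix
open scoped ComplexOrder

/-- `η(t) = −t·log t / log 2` for `t > 0`, and `0` otherwise. -/
noncomputable def eta (t : ℝ) : ℝ := if 0 < t then -t * Real.log t / Real.log 2 else 0

/-- The von Neumann entropy of a (Hermitian) matrix: the sum of `η` over its eigenvalues. -/
noncomputable def vnEntropy {n : Type*} [Fintype n] [DecidableEq n] (ρ : Matrix n n ℂ) : ℝ :=
  if h : ρ.IsHermitian then ∑ i, eta (h.eigenvalues i) else 0

/-- The four Pauli matrices `𝟙, X, Y, Z`. -/
noncomputable def pauli : Fin 4 → Matrix (Fin 2) (Fin 2) ℂ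
  | 0 => !![1, 0; 0, 1]
  | 1 => !![0, 1; 1, 0]
  | 2 => !![0, -Complex.I; Complex.I, 0]
  | 3 => !![1, 0; 0, -1]

/-- The diagonal Pauli string in `{𝟙, Z}^{⊗m}` determined by `t : Fin m → Bool`. -/
noncomputable def diagPauliString {m : ℕ} (t : Fin m → Bool) :
    Matrix (Fin m → Fin 2) (Fin m → Fin 2) ℂ :=
  Matrix.of fun a b => ∏ i, pauli (if t i then 3 else 0) (a i) (b i)

/-- The channel `Φ(ρ) = Σ_k A_k ρ A_k†` determined by a Kraus family. -/
noncomputable def krausChannel {m : ℕ}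
    (A : (Fin m → Fin 2) → Matrix (Fin m → Fin 2) (Fin m → Fin 2) ℂ)
    (ρ : Matrix (Fin m → Fin 2) (Fin m → Fin 2) ℂ) :
    Matrix (Fin m → Fin 2) (Fin m → Fin 2) ℂ :=
  ∑ k, A k * ρ * (A k)ᴴ

/-- The complementary channel `Φ^C(ρ) = [tr(A_j ρ A_k†)]_{j,k}` of a Kraus family. -/
noncomputable def krausComp {m : ℕ}
    (A : (Fin m → Fin 2) → Matrix (Fin m → Fin 2) (Fin m → Fin 2) ℂ)
    (ρ : Matrix (Fin m → Fin 2) (Fin m → Fin 2) ℂ) :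
    Matrix (Fin m → Fin 2) (Fin m → Fin 2) ℂ :=
  Matrix.of fun j k => (A j * ρ * (A k)ᴴ).trace

/-- The coherent information `I_coh(Φ, ρ) = S(Φ(ρ)) − S(Φ^C(ρ))` of a Kraus family. -/
noncomputable def Icoh {m : ℕ}
    (A : (Fin m → Fin 2) → Matrix (Fin m → Fin 2) (Fin m → Fin 2) ℂ)
    (ρ : Matrix (Fin m → Fin 2) (Fin m → Fin 2) ℂ) : ℝ :=
  vnEntropy (krausChannel A ρ) - vnEntropy (krausComp A ρ)

/-! Conjugating `ρ` by the `2 ^ m` diagonal Pauli strings and averaging (twirling) kills every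
off-diagonal entry `ρ a b`, because for `a ≠ b` the signs of the strings at `a` and at `b` are
uncorrelated. By covariance of `Φ` and `Φ^C` and unitary invariance of the entropy, `I_coh` is
constant on this orbit, so Jensen's inequality for the concave `I_coh` gives a diagonal density
matrix whose coherent information is at least that of `ρ`. -/

open Finset

lemma sum_inv_card_eq_one (ι : Type*) [Fintype ι] [Nonempty ι] :
    ∑ _i : ι, (Fintype.card ι : ℝ)⁻¹ = 1 := by
  rw [sum_const, card_univ, nsmul_eq_mul, mul_inv_cancel₀ (by positivity)]

section UnitaryInvariance

variable {n : Type*} [Fintype n] [DecidableEq n]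

lemma isHermitian_unitary_conj_iff {U : Matrix n n ℂ} (hU : U ∈ unitaryGroup n ℂ)
    {X : Matrix n n ℂ} : (U * X * star U).IsHermitian ↔ X.IsHermitian := by
  refine ⟨fun h => ?_, isHermitian_mul_mul_conjTranspose U⟩
  have hX : star U * (U * X * star U) * U = X := by
    simp only [← Matrix.mul_assoc, Unitary.star_mul_self_of_mem hU, Matrix.one_mul]
    rw [Matrix.mul_assoc, Unitary.star_mul_self_of_mem hU, Matrix.mul_one]
  simpa only [← star_eq_conjTranspose, hX] using isHermitian_conjTranspose_mul_mul U h

lemma charpoly_unitary_conj {U : Matrix n n ℂ} (hU : U ∈ unitaryGroup n ℂ) (X : Matrix n n ℂ) :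
    (U * X * star U).charpoly = X.charpoly := by
  rw [charpoly_mul_comm, ← Matrix.mul_assoc, Unitary.star_mul_self_of_mem hU, Matrix.one_mul]

lemma vnEntropy_unitary_conj {U : Matrix n n ℂ} (hU : U ∈ unitaryGroup n ℂ) (X : Matrix n n ℂ) :
    vnEntropy (U * X * star U) = vnEntropy X := by
  by_cases hX : X.IsHermitian
  · have hUX := (isHermitian_unitary_conj_iff hU).mpr hX
    rw [vnEntropy, vnEntropy, dif_pos hUX, dif_pos hX,
      (hUX.eigenvalues_eq_eigenvalues_iff hX).mpr (charpoly_unitary_conj hU X)]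
  · rw [vnEntropy, vnEntropy, dif_neg hX, dif_neg (mt (isHermitian_unitary_conj_iff hU).mp hX)]

end UnitaryInvariance

section DensityMatrices

def densityMatrices (n : Type*) [Fintype n] : Set (Matrix n n ℂ) :=
  {ρ | ρ.PosSemidef ∧ ρ.trace = 1}

variable {n : Type*} [Fintype n]

lemma convex_densityMatrices : Convex ℝ (densityMatrices n) := by
  rintro ρ ⟨hρ, hρtr⟩ σ ⟨hσ, hσtr⟩ a b ha hb hab
  refine ⟨(hρ.smul ha).add (hσ.smul hb), ?_⟩
  rw [trace_add, trace_smul, trace_smul, hρtr, hσtr, ← add_smul, hab, one_smul]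

lemma concaveOn_densityMatrices {f : Matrix n n ℂ → ℝ}
    (hf : ∀ ρ σ : Matrix n n ℂ, ρ.PosSemidef → ρ.trace = 1 → σ.PosSemidef → σ.trace = 1 →
      ∀ s : ℝ, 0 ≤ s → s ≤ 1 →
        s * f ρ + (1 - s) * f σ ≤ f ((s : ℂ) • ρ + ((1 - s : ℝ) : ℂ) • σ)) :
    ConcaveOn ℝ (densityMatrices n) f := by
  refine ⟨convex_densityMatrices, fun ρ ⟨hρ, hρtr⟩ σ ⟨hσ, hσtr⟩ a b ha hb hab => ?_⟩
  obtain rfl : b = 1 - a := by linarith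
  simpa only [smul_eq_mul, Complex.coe_smul] using hf ρ σ hρ hρtr hσ hσtr a ha (by linarith)

end DensityMatrices

variable {m : ℕ}

def diagPauliSign (t : Fin m → Bool) (a : Fin m → Fin 2) : ℂ :=
  ∏ i, if t i ∧ a i = 1 then -1 else 1

lemma pauli_ite_apply (x : Bool) (u v : Fin 2) :
    pauli (if x then 3 else 0) u v = if u = v then (if x ∧ u = 1 then -1 else 1) else 0 := by
  fin_cases u <;> fin_cases v <;> cases x <;> simp [pauli]

lemma diagPauliString_eq_diagonal (t : Fin m → Bool) :
    diagPauliString t = diagonal (diagPauliSign t) := by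
  ext a b
  rcases eq_or_ne a b with rfl | hab
  · simp only [diagPauliString, of_apply, diagonal_apply_eq, diagPauliSign, pauli_ite_apply,
      if_true]
  · obtain ⟨i, hi⟩ := Function.ne_iff.mp hab
    rw [diagonal_apply_ne _ hab, diagPauliString, of_apply]
    exact prod_eq_zero (mem_univ i) (by rw [pauli_ite_apply, if_neg hi])

lemma diagPauliSign_mul_self (t : Fin m → Bool) (a : Fin m → Fin 2) :
    diagPauliSign t a * diagPauliSign t a = 1 := by
  rw [diagPauliSign, ← prod_mul_distrib]
  exact prod_eq_one fun i _ => by split_ifs <;> norm_num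

lemma star_diagPauliSign (t : Fin m → Bool) (a : Fin m → Fin 2) :
    star (diagPauliSign t a) = diagPauliSign t a := by
  rw [diagPauliSign, star_prod]
  exact prod_congr rfl fun i _ => by split_ifs <;> simp

lemma sum_diagPauliSign_mul_eq_zero {a b : Fin m → Fin 2} (hab : a ≠ b) :
    ∑ t : Fin m → Bool, diagPauliSign t a * diagPauliSign t b = 0 := by
  obtain ⟨i₀, hi₀⟩ := Function.ne_iff.mp hab
  simp only [diagPauliSign, ← prod_mul_distrib]
  rw [← Fintype.prod_sum fun i (x : Bool) =>
    (if x ∧ a i = 1 then (-1 : ℂ) else 1) * if x ∧ b i = 1 then -1 else 1]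
  refine prod_eq_zero (mem_univ i₀) ?_
  rw [Fintype.sum_bool]
  generalize a i₀ = u, b i₀ = v at hi₀
  fin_cases u <;> fin_cases v <;> simp_all

lemma star_diagPauliString (t : Fin m → Bool) : star (diagPauliString t) = diagPauliString t := by
  rw [diagPauliString_eq_diagonal, star_eq_conjTranspose, diagonal_conjTranspose]
  exact congrArg diagonal (funext (star_diagPauliSign t))

lemma diagPauliString_mul_self (t : Fin m → Bool) :
    diagPauliString t * diagPauliString t = 1 := by
  rw [diagPauliString_eq_diagonal, diagonal_mul_diagonal, ← diagonal_one]
  exact congrArg diagonal (funext (diagPauliSign_mul_self t))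

lemma diagPauliString_mem_unitaryGroup (t : Fin m → Bool) :
    diagPauliString t ∈ unitaryGroup (Fin m → Fin 2) ℂ := by
  rw [mem_unitaryGroup_iff, star_diagPauliString, diagPauliString_mul_self]

noncomputable def diagPauliTwirl (ρ : Matrix (Fin m → Fin 2) (Fin m → Fin 2) ℂ) :
    Matrix (Fin m → Fin 2) (Fin m → Fin 2) ℂ :=
  ∑ t : Fin m → Bool,
    (Fintype.card (Fin m → Bool) : ℝ)⁻¹ • (diagPauliString t * ρ * diagPauliString t)

lemma diagPauliTwirl_apply_of_ne (ρ : Matrix (Fin m → Fin 2) (Fin m → Fin 2) ℂ)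
    {a b : Fin m → Fin 2} (hab : a ≠ b) : diagPauliTwirl ρ a b = 0 := by
  simp only [diagPauliTwirl, Matrix.sum_apply, Matrix.smul_apply, diagPauliString_eq_diagonal,
    mul_diagonal, diagonal_mul, Complex.real_smul]
  calc ∑ t : Fin m → Bool, _ = (Fintype.card (Fin m → Bool) : ℂ)⁻¹ * ρ a b *
        ∑ t : Fin m → Bool, diagPauliSign t a * diagPauliSign t b := by
        rw [mul_sum]; push_cast; exact sum_congr rfl fun t _ => by ring
    _ = 0 := by rw [sum_diagPauliSign_mul_eq_zero hab, mul_zero]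

lemma diagPauliString_conj_mem_densityMatrices (t : Fin m → Bool)
    {ρ : Matrix (Fin m → Fin 2) (Fin m → Fin 2) ℂ} (hρ : ρ ∈ densityMatrices _) :
    diagPauliString t * ρ * diagPauliString t ∈ densityMatrices _ := by
  refine ⟨?_, ?_⟩
  · simpa only [← star_eq_conjTranspose, star_diagPauliString]
      using hρ.1.mul_mul_conjTranspose_same (diagPauliString t)
  · rw [trace_mul_cycle, diagPauliString_mul_self, Matrix.one_mul, hρ.2]

lemma diagPauliTwirl_mem_densityMatrices {ρ : Matrix (Fin m → Fin 2) (Fin m → Fin 2) ℂ}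
    (hρ : ρ ∈ densityMatrices _) : diagPauliTwirl ρ ∈ densityMatrices _ :=
  convex_densityMatrices.sum_mem (fun _ _ => by positivity) (sum_inv_card_eq_one _)
    fun t _ => diagPauliString_conj_mem_densityMatrices t hρ

lemma Icoh_diagPauliString_conj
    {A : (Fin m → Fin 2) → Matrix (Fin m → Fin 2) (Fin m → Fin 2) ℂ}
    (hcov : ∀ (t : Fin m → Bool) (ρ : Matrix (Fin m → Fin 2) (Fin m → Fin 2) ℂ),
      krausChannel A (diagPauliString t * ρ * diagPauliString t)
        = diagPauliString t * krausChannel A ρ * diagPauliString t)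
    (hcovC : ∀ (t : Fin m → Bool) (ρ : Matrix (Fin m → Fin 2) (Fin m → Fin 2) ℂ),
      krausComp A (diagPauliString t * ρ * diagPauliString t)
        = diagPauliString t * krausComp A ρ * diagPauliString t)
    (t : Fin m → Bool) (ρ : Matrix (Fin m → Fin 2) (Fin m → Fin 2) ℂ) :
    Icoh A (diagPauliString t * ρ * diagPauliString t) = Icoh A ρ := by
  have h := vnEntropy_unitary_conj (diagPauliString_mem_unitaryGroup t)
  rw [star_diagPauliString] at h
  rw [Icoh, Icoh, hcov, hcovC, h, h]

lemma Icoh_le_Icoh_diagPauliTwirl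
    {A : (Fin m → Fin 2) → Matrix (Fin m → Fin 2) (Fin m → Fin 2) ℂ}
    (hinv : ∀ t ρ, Icoh A (diagPauliString t * ρ * diagPauliString t) = Icoh A ρ)
    (hconc : ConcaveOn ℝ (densityMatrices _) (Icoh A))
    {ρ : Matrix (Fin m → Fin 2) (Fin m → Fin 2) ℂ} (hρ : ρ ∈ densityMatrices _) :
    Icoh A ρ ≤ Icoh A (diagPauliTwirl ρ) := by
  calc Icoh A ρ
      = ∑ t : Fin m → Bool, (Fintype.card (Fin m → Bool) : ℝ)⁻¹ •
          Icoh A (diagPauliString t * ρ * diagPauliString t) := by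
        simp only [hinv, ← sum_smul, sum_inv_card_eq_one, one_smul]
    _ ≤ Icoh A (diagPauliTwirl ρ) :=
        hconc.le_map_sum (fun _ _ => by positivity) (sum_inv_card_eq_one _)
          fun t _ => diagPauliString_conj_mem_densityMatrices t hρ

theorem sup_coherent_information_on_diagonal_general (m : ℕ)
    (A : (Fin m → Fin 2) → Matrix (Fin m → Fin 2) (Fin m → Fin 2) ℂ)
    (hcov : ∀ (t : Fin m → Bool) (ρ : Matrix (Fin m → Fin 2) (Fin m → Fin 2) ℂ),
      krausChannel A (diagPauliString t * ρ * diagPauliString t)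
        = diagPauliString t * krausChannel A ρ * diagPauliString t)
    (hcovC : ∀ (t : Fin m → Bool) (ρ : Matrix (Fin m → Fin 2) (Fin m → Fin 2) ℂ),
      krausComp A (diagPauliString t * ρ * diagPauliString t)
        = diagPauliString t * krausComp A ρ * diagPauliString t)
    (hconc : ∀ (ρ σ : Matrix (Fin m → Fin 2) (Fin m → Fin 2) ℂ),
      ρ.PosSemidef → ρ.trace = 1 → σ.PosSemidef → σ.trace = 1 →
      ∀ s : ℝ, 0 ≤ s → s ≤ 1 →
        s * Icoh A ρ + (1 - s) * Icoh A σ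
          ≤ Icoh A ((s : ℂ) • ρ + ((1 - s : ℝ) : ℂ) • σ)) :
    sSup {r : ℝ | ∃ ρ : Matrix (Fin m → Fin 2) (Fin m → Fin 2) ℂ,
        ρ.PosSemidef ∧ ρ.trace = 1 ∧ r = Icoh A ρ}
      = sSup {r : ℝ | ∃ ρ : Matrix (Fin m → Fin 2) (Fin m → Fin 2) ℂ,
        ρ.PosSemidef ∧ ρ.trace = 1 ∧ (∀ a b, a ≠ b → ρ a b = 0) ∧ r = Icoh A ρ} := by
  apply csSup_eq_csSup_of_forall_exists_le
  · rintro _ ⟨ρ, hρ, hρtr, rfl⟩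
    obtain ⟨hσ, hσtr⟩ := diagPauliTwirl_mem_densityMatrices ⟨hρ, hρtr⟩
    exact ⟨_, ⟨diagPauliTwirl ρ, hσ, hσtr, fun a b => diagPauliTwirl_apply_of_ne ρ, rfl⟩,
      Icoh_le_Icoh_diagPauliTwirl (Icoh_diagPauliString_conj hcov hcovC)
        (concaveOn_densityMatrices hconc) ⟨hρ, hρtr⟩⟩
  · rintro _ ⟨ρ, hρ, hρtr, -, rfl⟩
    exact ⟨_, ⟨ρ, hρ, hρtr, rfl⟩, le_rfl⟩

/-- For a quantum channel that, together with its complementary channel, is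
covariant with respect to all diagonal Pauli strings, and whose coherent information is concave
on density matrices, the supremum of the coherent information over all density matrices equals
its supremum over diagonal density matrices. -/
theorem sup_coherent_information_on_diagonal (m : ℕ)
    (A : (Fin m → Fin 2) → Matrix (Fin m → Fin 2) (Fin m → Fin 2) ℂ)
    (hTP : ∑ k, (A k)ᴴ * A k = 1)
    (hcov : ∀ (t : Fin m → Bool) (ρ : Matrix (Fin m → Fin 2) (Fin m → Fin 2) ℂ),
      krausChannel A (diagPauliString t * ρ * diagPauliString t)
        = diagPauliString t * krausChannel A ρ * diagPauliString t)
    (hcovC : ∀ (t : Fin m → Bool) (ρ : Matrix (Fin m → Fin 2) (Fin m → Fin 2) ℂ),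
      krausComp A (diagPauliString t * ρ * diagPauliString t)
        = diagPauliString t * krausComp A ρ * diagPauliString t)
    (hconc : ∀ (ρ σ : Matrix (Fin m → Fin 2) (Fin m → Fin 2) ℂ),
      ρ.PosSemidef → ρ.trace = 1 → σ.PosSemidef → σ.trace = 1 →
      ∀ s : ℝ, 0 ≤ s → s ≤ 1 →
        s * Icoh A ρ + (1 - s) * Icoh A σ
          ≤ Icoh A ((s : ℂ) • ρ + ((1 - s : ℝ) : ℂ) • σ)) :
    sSup {r : ℝ | ∃ ρ : Matrix (Fin m → Fin 2) (Fin m → Fin 2) ℂ,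
        ρ.PosSemidef ∧ ρ.trace = 1 ∧ r = Icoh A ρ}
      = sSup {r : ℝ | ∃ ρ : Matrix (Fin m → Fin 2) (Fin m → Fin 2) ℂ,
        ρ.PosSemidef ∧ ρ.trace = 1 ∧ (∀ a b, a ≠ b → ρ a b = 0) ∧ r = Icoh A ρ} :=
  sup_coherent_information_on_diagonal_general m A hcov hcovC hconc
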